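/- arXiv:2309.16872 — 4 statements merged into one kernel-verified Lean document; each statement's English description precedes it below -/
import Mathlib

section
/- Let K ⊆ ℝⁿ be a convex body, u ∈ S^{n-1} and c > 0. Then K has a c-cusp in direction u if and only if the support function h_K is linear on the ball U(u,c) = u + cBⁿ (i.e., agrees there with a linear functional x ↦ ⟨x, w⟩ for some w ∈ ℝⁿ). -/
open Set MeasureTheory Metric
open scoped Pointwise

noncomputable section

abbrev Euc (n : ℕ) := EuclideanSpace ℝ (Fin n)

/-- Support function of a set. -/
def suppFn {n : ℕ} (K : Set (Euc n)) (u : Euc n) : ℝ :=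
  sSup ((fun x => (inner ℝ x u : ℝ)) '' K)

/-- Support set `F(K, u)`. -/
def suppSet {n : ℕ} (K : Set (Euc n)) (u : Euc n) : Set (Euc n) :=
  {x ∈ K | (inner ℝ x u : ℝ) = suppFn K u}

/-- `F` is a face of the convex set `A`. -/
def IsFaceOf {n : ℕ} (F A : Set (Euc n)) : Prop :=
  F ⊆ A ∧ Convex ℝ F ∧
    ∀ x ∈ A, ∀ y ∈ A, (F ∩ openSegment ℝ x y).Nonempty → segment ℝ x y ⊆ F

/-- Normal cone of `K` at `S`, within the subspace `V`. -/
def normalConeIn {n : ℕ} (V : Submodule ℝ (Euc n)) (K S : Set (Euc n)) : Set (Euc n) :=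
  {u | u ∈ V ∧ u ≠ 0 ∧ S ⊆ suppSet K u} ∪ {0}

/-- `T` is the touching cone of `K` in direction `u` within `V`. -/
def IsTouchingConeIn {n : ℕ} (V : Submodule ℝ (Euc n)) (K : Set (Euc n)) (u : Euc n)
    (T : Set (Euc n)) : Prop :=
  IsFaceOf T (normalConeIn V K (suppSet K u)) ∧ u ∈ intrinsicInterior ℝ T

/-- Orthogonal complement (within `V`) of a set `T`. -/
def orthIn {n : ℕ} (V : Submodule ℝ (Euc n)) (T : Set (Euc n)) : Set (Euc n) :=
  {x | x ∈ V ∧ ∀ t ∈ T, (inner ℝ x t : ℝ) = 0}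

/-- Orthogonal projection onto a subspace, as a map of the ambient space. -/
def projW {n : ℕ} (W : Submodule ℝ (Euc n)) (x : Euc n) : Euc n :=
  (W.orthogonalProjection x : Euc n)

/-- The cone of `c`-cusp directions. -/
def cuspCone {n : ℕ} (c : ℝ) (u : Euc n) : Set (Euc n) :=
  {y | (inner ℝ y u : ℝ) ≤ -c * ‖y‖}

/-- `K` has a `c`-cusp in direction `u`. -/
def HasCusp {n : ℕ} (K : Set (Euc n)) (c : ℝ) (u : Euc n) : Prop :=
  ∃ x ∈ K, K ⊆ x +ᵥ cuspCone c u

/-- `f` is linear on `A`. -/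
def LinearOn {n : ℕ} (f : Euc n → ℝ) (A : Set (Euc n)) : Prop :=
  ∃ w, ∀ x ∈ A, f x = (inner ℝ x w : ℝ)

/-- A tuple of nonempty sets is semicritical. -/
def Semicritical {n ℓ : ℕ} (A : Fin ℓ → Set (Euc n)) : Prop :=
  ∀ I : Finset (Fin ℓ), I.Nonempty →
    I.card ≤ Module.finrank ℝ (Submodule.span ℝ (∑ i ∈ I, (A i - A i)) : Submodule ℝ (Euc n))

/-- Support of a measure on a topological space. -/
def measSupport {α : Type*} [TopologicalSpace α] [MeasurableSpace α] (μ : Measure α) : Set α :=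
  {x | ∀ U : Set α, IsOpen U → x ∈ U → 0 < μ U}

/-- Mixed volume of an `n`-tuple of sets in `ℝⁿ`, by inclusion–exclusion. -/
def mixedVolume {n : ℕ} (K : Fin n → Set (Euc n)) : ℝ :=
  (∑ I : Finset (Fin n), (-1 : ℝ) ^ (n - I.card) * (volume (∑ i ∈ I, K i)).toReal) / n.factorial

/-- `d`-dimensional mixed volume of a `d`-tuple of sets in `ℝⁿ`, via Hausdorff measure. -/
def mixedVolumeH {n : ℕ} (d : ℕ) (K : Fin d → Set (Euc n)) : ℝ :=
  (∑ I : Finset (Fin d), (-1 : ℝ) ^ (d - I.card) * (μH[d] (∑ i ∈ I, K i)).toReal) / d.factorial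

/-- `S` is the mixed area measure of the tuple `K`. -/
def IsMixedAreaMeasure {m : ℕ} (K : Fin m → Set (Euc (m + 1)))
    (S : Measure (Metric.sphere (0 : Euc (m + 1)) 1)) : Prop :=
  ∀ L : Set (Euc (m + 1)), Convex ℝ L → IsCompact L → L.Nonempty →
    mixedVolume (Fin.snoc K L) = ((m : ℝ) + 1)⁻¹ * ∫ u, suppFn L (u : Euc (m + 1)) ∂S

/-- A tuple of subspaces is semicritical. -/
def SemicriticalSub {n ℓ : ℕ} (V : Fin ℓ → Submodule ℝ (Euc n)) : Prop :=
  ∀ I : Finset (Fin ℓ), I.Nonempty → I.card ≤ Module.finrank ℝ (I.sup V : Submodule ℝ (Euc n))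

end

/-- A convex body has a `c`-cusp in direction `u` iff its support function is linear on the
ball `u + c Bⁿ`. -/
theorem hasCusp_iff_linearOn_ball {n : ℕ} (K : Set (Euc n)) (hKconv : Convex ℝ K)
    (hKcomp : IsCompact K) (hKne : K.Nonempty) (u : Euc n) (hu : ‖u‖ = 1) (c : ℝ) (hc : 0 < c) :
    HasCusp K c u ↔ LinearOn (suppFn K) (Metric.closedBall u c) := by
  have hbdd : ∀ v : Euc n, BddAbove ((fun x => (inner ℝ x v : ℝ)) '' K) := fun v =>
    hKcomp.bddAbove_image ((continuous_id.inner continuous_const).continuousOn)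
  have hne : ∀ v : Euc n, ((fun x => (inner ℝ x v : ℝ)) '' K).Nonempty := fun v => hKne.image _
  have hle : ∀ v : Euc n, ∀ y ∈ K, (inner ℝ y v : ℝ) ≤ suppFn K v := fun v y hy =>
    le_csSup (hbdd v) ⟨y, hy, rfl⟩
  constructor
  · rintro ⟨x, hxK, hsub⟩
    refine ⟨x, fun v hv => ?_⟩
    rw [real_inner_comm]
    refine le_antisymm ?_ (hle v x hxK)
    refine csSup_le (hne v) ?_
    rintro r ⟨y, hy, rfl⟩
    have hz : (inner ℝ (y - x) u : ℝ) ≤ -c * ‖y - x‖ := by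
      have h1 := hsub hy
      rw [Set.mem_vadd_set_iff_neg_vadd_mem] at h1
      simpa [cuspCone, neg_add_eq_sub] using h1
    have hvu : ‖v - u‖ ≤ c := by rwa [← dist_eq_norm, ← Metric.mem_closedBall]
    have h2 : (inner ℝ (y - x) v : ℝ) ≤ 0 := by
      have h3 : (inner ℝ (y - x) v : ℝ) = inner ℝ (y - x) u + inner ℝ (y - x) (v - u) := by
        rw [inner_sub_right]; ring
      have h4 : (inner ℝ (y - x) (v - u) : ℝ) ≤ ‖y - x‖ * ‖v - u‖ := real_inner_le_norm _ _
      have h5 : ‖y - x‖ * ‖v - u‖ ≤ ‖y - x‖ * c := by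
        exact mul_le_mul_of_nonneg_left hvu (norm_nonneg _)
      nlinarith [hz]
    have h6 : (inner ℝ y v : ℝ) = inner ℝ x v + inner ℝ (y - x) v := by
      rw [inner_sub_left]; ring
    linarith
  · rintro ⟨w, hw⟩
    have huball : u ∈ Metric.closedBall u c := by simp [hc.le]
    -- the linear functional is below the support function everywhere
    have hlow : ∀ z : Euc n, (inner ℝ z w : ℝ) ≤ suppFn K z := by
      intro z
      by_cases hz : z ∈ Metric.closedBall u c
      · rw [← hw z hz]
      · have hzu : c < ‖z - u‖ := by
          rw [Metric.mem_closedBall, not_le, dist_eq_norm] at hz; exact hz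
        have hzu0 : (0 : ℝ) < ‖z - u‖ := lt_trans hc hzu
        set s : ℝ := c / ‖z - u‖ with hs
        have hs0 : 0 < s := div_pos hc hzu0
        have hs1 : s < 1 := (div_lt_one hzu0).mpr hzu
        set p : Euc n := u + s • (z - u) with hp
        have hpball : p ∈ Metric.closedBall u c := by
          rw [Metric.mem_closedBall, dist_eq_norm]
          have : p - u = s • (z - u) := by rw [hp]; abel
          rw [this, norm_smul, Real.norm_of_nonneg hs0.le, hs,
            div_mul_cancel₀ _ (ne_of_gt hzu0)]
        have hpw : suppFn K p = inner ℝ p w := hw p hpball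
        have hpcomb : ∀ y : Euc n, (inner ℝ y p : ℝ) = (1 - s) * inner ℝ y u + s * inner ℝ y z := by
          intro y
          rw [hp]
          rw [inner_add_right, real_inner_smul_right, inner_sub_right]
          ring
        have hconv : suppFn K p ≤ (1 - s) * suppFn K u + s * suppFn K z := by
          refine csSup_le (hne p) ?_
          rintro r ⟨y, hy, rfl⟩
          dsimp only
          rw [hpcomb y]
          have := hle u y hy
          have := hle z y hy
          nlinarith
        have hpw2 : (inner ℝ p w : ℝ) = (1 - s) * inner ℝ u w + s * inner ℝ z w := by
          rw [hp, inner_add_left, real_inner_smul_left, inner_sub_left]; ring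
        have huw : suppFn K u = inner ℝ u w := hw u huball
        rw [hpw, hpw2, huw] at hconv
        nlinarith
    -- the point w is in K
    have hwK : w ∈ K := by
      by_contra hwK
      obtain ⟨f, t, hft, htw⟩ :=
        geometric_hahn_banach_closed_point hKconv hKcomp.isClosed hwK
      set v : Euc n := (InnerProductSpace.toDual ℝ (Euc n)).symm f with hv
      have hfv : ∀ y : Euc n, f y = (inner ℝ v y : ℝ) := by
        intro y; rw [hv, InnerProductSpace.toDual_symm_apply]
      have hsup : suppFn K v ≤ t := by
        refine csSup_le (hne v) ?_
        rintro r ⟨y, hy, rfl⟩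
        have := hft y hy
        rw [hfv y, real_inner_comm] at this
        exact this.le
      have := hlow v
      rw [hfv w] at htw
      linarith
    refine ⟨w, hwK, ?_⟩
    intro y hy
    rw [Set.mem_vadd_set_iff_neg_vadd_mem]
    have hgoal : -w +ᵥ y = y - w := by
      simp [vadd_eq_add, neg_add_eq_sub]
    rw [hgoal]
    show (inner ℝ (y - w) u : ℝ) ≤ -c * ‖y - w‖
    set z : Euc n := y - w with hz
    by_cases hz0 : z = 0
    · simp [hz0]
    · have hzn : (0 : ℝ) < ‖z‖ := norm_pos_iff.mpr hz0
      set v : Euc n := u + (c / ‖z‖) • z with hv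
      have hvball : v ∈ Metric.closedBall u c := by
        rw [Metric.mem_closedBall, dist_eq_norm]
        have : v - u = (c / ‖z‖) • z := by rw [hv]; abel
        rw [this, norm_smul, Real.norm_of_nonneg (div_pos hc hzn).le,
          div_mul_cancel₀ _ (ne_of_gt hzn)]
      have h1 : (inner ℝ y v : ℝ) ≤ inner ℝ v w := by
        have := hle v y hy
        rwa [hw v hvball] at this
      have h2 : (inner ℝ z v : ℝ) ≤ 0 := by
        have e : (inner ℝ z v : ℝ) = inner ℝ y v - inner ℝ w v := by
          rw [hz, inner_sub_left]
        have e2 : (inner ℝ w v : ℝ) = inner ℝ v w := real_inner_comm v w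
        rw [e, e2]
        linarith
      have h3 : (inner ℝ z v : ℝ) = inner ℝ z u + c * ‖z‖ := by
        rw [hv, inner_add_right, real_inner_smul_right, real_inner_self_eq_norm_sq]
        field_simp
      linarith [h3 ▸ h2]
end

section
/- Let K ⊆ ℝⁿ be a convex body and u ∈ S^{n-1}. Then the touching space TS(K,u) equals {0} if and only if there exists c > 0 such that K has a c-cusp in direction u. -/
open Set MeasureTheory Metric
open scoped Pointwise

section CuspHelpers

variable {n : ℕ}

lemma suppFn_bddAbove {K : Set (Euc n)} (hK : IsCompact K) (v : Euc n) :
    BddAbove ((fun x => (inner ℝ x v : ℝ)) '' K) :=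
  (hK.image (Continuous.inner continuous_id continuous_const)).bddAbove

lemma mem_suppSet_iff {K : Set (Euc n)} (hK : IsCompact K) {v x : Euc n} :
    x ∈ suppSet K v ↔ x ∈ K ∧ ∀ y ∈ K, (inner ℝ y v : ℝ) ≤ (inner ℝ x v : ℝ) := by
  constructor
  · rintro ⟨hx, hsup⟩
    exact ⟨hx, fun y hy => hsup ▸ le_csSup (suppFn_bddAbove hK v) ⟨y, hy, rfl⟩⟩
  · rintro ⟨hx, hmax⟩
    refine ⟨hx, le_antisymm (le_csSup (suppFn_bddAbove hK v) ⟨x, hx, rfl⟩) ?_⟩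
    exact csSup_le ⟨_, ⟨x, hx, rfl⟩⟩ (by rintro _ ⟨y, hy, rfl⟩; exact hmax y hy)

lemma exists_ball_subset_of_intrinsicInterior {T : Set (Euc n)} {u : Euc n}
    (haff : affineSpan ℝ T = ⊤) (hu : u ∈ intrinsicInterior ℝ T) :
    ∃ ε > 0, Metric.ball u ε ⊆ T := by
  obtain ⟨y, hy, rfl⟩ := hu
  obtain ⟨V, hVopen, hVeq⟩ := isOpen_induced_iff.mp
    (isOpen_interior (s := ((↑) ⁻¹' T : Set (affineSpan ℝ T))))
  have hyV : (y : Euc n) ∈ V := by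
    have : y ∈ Subtype.val ⁻¹' V := hVeq ▸ hy
    exact this
  obtain ⟨ε, hε, hball⟩ := Metric.isOpen_iff.mp hVopen _ hyV
  refine ⟨ε, hε, fun x hx => ?_⟩
  have hxspan : x ∈ affineSpan ℝ T := haff ▸ trivial
  have hmem : (⟨x, hxspan⟩ : affineSpan ℝ T) ∈ interior ((↑) ⁻¹' T : Set (affineSpan ℝ T)) := by
    rw [← hVeq]
    exact hball hx
  have hfin := interior_subset hmem
  exact hfin

end CuspHelpers

/-- The touching space of a convex body is trivial iff the body has a `c`-cusp in direction
`u` for some `c > 0`. -/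
theorem touchingSpace_trivial_iff_cusp {n : ℕ} (K : Set (Euc n)) (hKconv : Convex ℝ K)
    (hKcomp : IsCompact K) (hKne : K.Nonempty) (u : Euc n) (hu : ‖u‖ = 1)
    (T : Set (Euc n)) (hT : IsTouchingConeIn ⊤ K u T) :
    orthIn ⊤ T = {0} ↔ ∃ c : ℝ, 0 < c ∧ HasCusp K c u := by
  obtain ⟨⟨hTN, hTconv, hTface⟩, huT⟩ := hT
  have hu0 : u ≠ 0 := fun h => by simp [h] at hu
  set N := normalConeIn ⊤ K (suppSet K u) with hN
  have h0N : (0 : Euc n) ∈ N := Set.mem_union_right _ rfl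
  have huTmem : u ∈ T := intrinsicInterior_subset huT
  have hmemN : ∀ v : Euc n, v ≠ 0 → suppSet K u ⊆ suppSet K v → v ∈ N :=
    fun v hv hsub => Set.mem_union_left _ ⟨Submodule.mem_top, hv, hsub⟩
  constructor
  · intro horth
    -- 0 ∈ T
    have h2u : (2 : ℝ) • u ∈ N := by
      refine hmemN _ (smul_ne_zero two_ne_zero hu0) ?_
      intro y hy
      rw [mem_suppSet_iff hKcomp] at hy ⊢
      refine ⟨hy.1, fun z hz => ?_⟩
      have h := hy.2 z hz
      rw [real_inner_smul_right, real_inner_smul_right]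
      linarith
    have h0T : (0 : Euc n) ∈ T := by
      have hopen : u ∈ openSegment ℝ (0 : Euc n) ((2 : ℝ) • u) :=
        ⟨1/2, 1/2, by norm_num, by norm_num, by norm_num, by module⟩
      exact hTface 0 h0N ((2 : ℝ) • u) h2u ⟨u, huTmem, hopen⟩ (left_mem_segment ℝ _ _)
    -- span T = ⊤
    have hspan : Submodule.span ℝ T = ⊤ := by
      rw [← Submodule.orthogonal_eq_bot_iff, Submodule.eq_bot_iff]
      intro w hw
      have hw' : w ∈ orthIn ⊤ T := by
        refine ⟨Submodule.mem_top, fun t ht => ?_⟩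
        rw [real_inner_comm]
        exact (Submodule.mem_orthogonal _ w).mp hw t (Submodule.subset_span ht)
      have : w ∈ ({0} : Set (Euc n)) := horth ▸ hw'
      exact this
    -- affineSpan T = ⊤
    have haff : affineSpan ℝ T = ⊤ := by
      rw [eq_top_iff]
      intro x _
      have hdir : x ∈ (affineSpan ℝ T).direction := by
        rw [direction_affineSpan]
        have hx : x ∈ Submodule.span ℝ T := hspan ▸ Submodule.mem_top
        refine (Submodule.span_le.mpr ?_) hx
        intro t ht
        exact Submodule.subset_span ⟨t, ht, 0, h0T, sub_zero t⟩
      have h0aff : (0 : Euc n) ∈ affineSpan ℝ T := subset_affineSpan ℝ T h0T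
      simpa using AffineSubspace.vadd_mem_of_mem_direction hdir h0aff
    obtain ⟨ε, hε, hball⟩ := exists_ball_subset_of_intrinsicInterior haff huT
    have hballN : Metric.ball u ε ⊆ N := hball.trans hTN
    set c : ℝ := min (ε / 2) (1 / 2) with hcdef
    have hc : 0 < c := lt_min (by linarith) (by norm_num)
    obtain ⟨x, hxK, hxmax'⟩ := hKcomp.exists_isMaxOn hKne
      ((Continuous.inner continuous_id continuous_const).continuousOn
        (f := fun y : Euc n => (inner ℝ y u : ℝ)))
    have hxmax : ∀ y ∈ K, (inner ℝ y u : ℝ) ≤ inner ℝ x u := fun y hy => hxmax' hy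
    refine ⟨c, hc, x, hxK, fun y hy => ?_⟩
    rw [Set.mem_vadd_set_iff_neg_vadd_mem]
    show -x +ᵥ y ∈ cuspCone c u
    have hxsupp : x ∈ suppSet K u := (mem_suppSet_iff hKcomp).mpr ⟨hxK, hxmax⟩
    rw [vadd_eq_add, neg_add_eq_sub]
    by_cases hz : y - x = 0
    · simp [cuspCone, hz]
    · have hnz : 0 < ‖y - x‖ := norm_pos_iff.mpr hz
      set v : Euc n := u + (c / ‖y - x‖) • (y - x) with hvdef
      have hvu : ‖v - u‖ = c := by
        have h1 : v - u = (c / ‖y - x‖) • (y - x) := by rw [hvdef]; abel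
        rw [h1, norm_smul, Real.norm_eq_abs, abs_of_pos (div_pos hc hnz)]
        field_simp
      have hvball : v ∈ Metric.ball u ε := by
        rw [Metric.mem_ball, dist_eq_norm, hvu]
        have : c ≤ ε / 2 := min_le_left _ _
        linarith
      have hvN := hballN hvball
      have hvne : v ≠ 0 := by
        intro h0
        rw [h0, zero_sub, norm_neg, hu] at hvu
        have : c ≤ 1 / 2 := min_le_right _ _
        linarith
      have hsub : suppSet K u ⊆ suppSet K v := by
        rcases hvN with h | h
        · exact h.2.2
        · exact absurd h hvne
      have hxv := (mem_suppSet_iff hKcomp).mp (hsub hxsupp)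
      have hle : (inner ℝ y v : ℝ) ≤ inner ℝ x v := hxv.2 y hy
      have h3 : (inner ℝ (y - x) v : ℝ) = inner ℝ (y - x) u + (c / ‖y - x‖) * inner ℝ (y - x) (y - x) := by
        rw [hvdef, inner_add_right, real_inner_smul_right]
      have h4 : (inner ℝ (y - x) v : ℝ) = inner ℝ y v - inner ℝ x v := inner_sub_left _ _ _
      have h5 : (inner ℝ (y - x) (y - x) : ℝ) = ‖y - x‖ ^ 2 := real_inner_self_eq_norm_sq _
      have h6 : c / ‖y - x‖ * ‖y - x‖ ^ 2 = c * ‖y - x‖ := by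
        field_simp
      rw [h5, h6] at h3
      show (inner ℝ (y - x) u : ℝ) ≤ -c * ‖y - x‖
      linarith
  · rintro ⟨c, hc, x, hxK, hcusp⟩
    set c₀ : ℝ := min c (1 / 2) with hc₀def
    have hc₀ : 0 < c₀ := lt_min hc (by norm_num)
    have hc₀c : c₀ ≤ c := min_le_left _ _
    have hcusp' : ∀ y ∈ K, (inner ℝ (y - x) u : ℝ) ≤ -c * ‖y - x‖ := by
      intro y hy
      have h := hcusp hy
      rw [Set.mem_vadd_set_iff_neg_vadd_mem] at h
      rw [vadd_eq_add, neg_add_eq_sub] at h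
      exact h
    have hxsupp : x ∈ suppSet K u := by
      rw [mem_suppSet_iff hKcomp]
      refine ⟨hxK, fun y hy => ?_⟩
      have h1 := hcusp' y hy
      have h3 : (inner ℝ (y - x) u : ℝ) = inner ℝ y u - inner ℝ x u := inner_sub_left _ _ _
      nlinarith [norm_nonneg (y - x), mul_nonneg hc.le (norm_nonneg (y - x))]
    have hsingle : suppSet K u ⊆ {x} := by
      intro y hy
      have hyK := ((mem_suppSet_iff hKcomp).mp hy).1
      have hymax := ((mem_suppSet_iff hKcomp).mp hy).2
      have hxmax := ((mem_suppSet_iff hKcomp).mp hxsupp).2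
      have h2 : (inner ℝ y u : ℝ) = inner ℝ x u := le_antisymm (hxmax y hyK) (hymax x hxK)
      have h1 := hcusp' y hyK
      have h3 : (inner ℝ (y - x) u : ℝ) = inner ℝ y u - inner ℝ x u := inner_sub_left _ _ _
      have h4 : ‖y - x‖ ≤ 0 := by nlinarith
      have h5 : y - x = 0 := norm_le_zero_iff.mp h4
      have : y = x := by
        have := sub_eq_zero.mp h5
        exact this
      exact this
    have hballN : ∀ v : Euc n, dist v u < c₀ → v ∈ N := by
      intro v hv
      have hvu : ‖v - u‖ < c₀ := by rwa [dist_eq_norm] at hv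
      have hvne : v ≠ 0 := by
        intro h0
        rw [h0, zero_sub, norm_neg, hu] at hvu
        have : c₀ ≤ 1 / 2 := min_le_right _ _
        linarith
      refine hmemN v hvne ?_
      intro y hy
      have hy' : y = x := hsingle hy
      subst hy'
      rw [mem_suppSet_iff hKcomp]
      refine ⟨hxK, fun w hw => ?_⟩
      have h1 := hcusp' w hw
      have h2 : (inner ℝ (w - y) (v - u) : ℝ) ≤ ‖w - y‖ * ‖v - u‖ := real_inner_le_norm _ _
      have h3 : (inner ℝ (w - y) v : ℝ) = inner ℝ (w - y) u + inner ℝ (w - y) (v - u) := by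
        rw [← inner_add_right]
        congr 1
        abel
      have h4 : (inner ℝ (w - y) v : ℝ) = inner ℝ w v - inner ℝ y v := inner_sub_left _ _ _
      have h5 : ‖w - y‖ * ‖v - u‖ ≤ ‖w - y‖ * c₀ :=
        mul_le_mul_of_nonneg_left hvu.le (norm_nonneg _)
      have h6 : ‖w - y‖ * c₀ ≤ ‖w - y‖ * c :=
        mul_le_mul_of_nonneg_left hc₀c (norm_nonneg _)
      linarith
    have hballT : ∀ z : Euc n, dist z u < c₀ / 2 → z ∈ T := by
      intro z hz
      have hzN : z ∈ N := hballN z (by linarith)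
      have hyN : (2 : ℝ) • u - z ∈ N := by
        refine hballN _ ?_
        have h1 : (2 : ℝ) • u - z - u = u - z := by module
        rw [dist_eq_norm, h1, ← neg_sub, norm_neg, ← dist_eq_norm]
        linarith
      have hopen : u ∈ openSegment ℝ z ((2 : ℝ) • u - z) :=
        ⟨1/2, 1/2, by norm_num, by norm_num, by norm_num, by module⟩
      exact hTface z hzN _ hyN ⟨u, huTmem, hopen⟩ (left_mem_segment ℝ _ _)
    ext w
    simp only [Set.mem_singleton_iff]
    constructor
    · rintro ⟨-, hw⟩
      by_contra hw0
      have hwn : 0 < ‖w‖ := norm_pos_iff.mpr hw0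
      set t : Euc n := u + (c₀ / (4 * ‖w‖)) • w with htdef
      have htT : t ∈ T := by
        refine hballT t ?_
        have h1 : t - u = (c₀ / (4 * ‖w‖)) • w := by rw [htdef]; abel
        rw [dist_eq_norm, h1, norm_smul, Real.norm_eq_abs, abs_of_pos (by positivity)]
        have : c₀ / (4 * ‖w‖) * ‖w‖ = c₀ / 4 := by field_simp
        rw [this]
        linarith
      have h1 : (inner ℝ w u : ℝ) = 0 := hw u huTmem
      have h2 : (inner ℝ w t : ℝ) = 0 := hw t htT
      rw [htdef, inner_add_right, real_inner_smul_right, h1, zero_add,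
        real_inner_self_eq_norm_sq] at h2
      have h3 : c₀ / (4 * ‖w‖) * ‖w‖ ^ 2 = c₀ * ‖w‖ / 4 := by field_simp
      rw [h3] at h2
      nlinarith
    · rintro rfl
      exact ⟨Submodule.mem_top, fun t _ => inner_zero_left t⟩
end

section
/- Let A₁,…,A_ℓ be nonempty subsets of ℝⁿ. Then the tuple (A₁,…,A_ℓ) is semicritical (i.e., for every nonempty I ⊆ [ℓ], dim span(∑_{i∈I}(A_i − A_i)) ≥ |I|) if and only if there exist pairs (x_i, y_i) ∈ A_i × A_i for i ∈ [ℓ] such that the vectors y_i − x_i are linearly independent. -/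
open Set MeasureTheory Metric
open scoped Pointwise

section RadoAux

open Submodule Module

lemma aux_finrank_map_mkQ {V : Type*} [AddCommGroup V] [Module ℝ V] [FiniteDimensional ℝ V]
    (K U : Submodule ℝ V) :
    finrank ℝ (U.map K.mkQ) + finrank ℝ K = finrank ℝ ((U ⊔ K : Submodule ℝ V)) := by
  have h1 : U.map K.mkQ = (U ⊔ K).map K.mkQ := by
    rw [Submodule.map_sup]
    have h0 : K.map K.mkQ = ⊥ := by
      rw [← le_bot_iff, Submodule.map_le_iff_le_comap, Submodule.comap_bot, Submodule.ker_mkQ]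
    rw [h0, sup_bot_eq]
  have h2 := LinearMap.finrank_range_add_finrank_ker (K.mkQ.domRestrict (U ⊔ K))
  rw [LinearMap.range_domRestrict, LinearMap.ker_domRestrict] at h2
  have h3 : finrank ℝ (LinearMap.ker K.mkQ ⊓ (U ⊔ K) : Submodule ℝ V)
      = finrank ℝ ((Submodule.comap (U ⊔ K).subtype (LinearMap.ker K.mkQ))) := by
    rw [← Submodule.finrank_map_subtype_eq (U ⊔ K), Submodule.map_comap_subtype, inf_comm]
  have h4 : LinearMap.ker K.mkQ ⊓ (U ⊔ K) = K := by
    rw [Submodule.ker_mkQ]; exact inf_eq_left.mpr le_sup_right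
  rw [← h1] at h2
  rw [h4] at h3
  rw [← h3] at h2
  exact h2

lemma rado (ℓ : ℕ) : ∀ (V : Type) [AddCommGroup V] [Module ℝ V] [FiniteDimensional ℝ V]
    (S : Fin ℓ → Set V),
    (∀ I : Finset (Fin ℓ), I.Nonempty →
      I.card ≤ finrank ℝ (span ℝ (⋃ i ∈ I, S i) : Submodule ℝ V)) →
    ∃ v : Fin ℓ → V, (∀ i, v i ∈ S i) ∧ LinearIndependent ℝ v := by
  induction ℓ with
  | zero =>
    intro V _ _ _ S _
    exact ⟨Fin.elim0, fun i => i.elim0, linearIndependent_empty_type⟩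
  | succ ℓ ih =>
    intro V _ _ _ S h
    classical
    set U : Finset (Fin ℓ) → Submodule ℝ V :=
      fun I => span ℝ (⋃ i ∈ I, S i.castSucc) with hU
    have hUmono : ∀ {I J : Finset (Fin ℓ)}, I ⊆ J → U I ≤ U J := by
      intro I J hIJ
      apply span_mono
      intro x hx
      simp only [Set.mem_iUnion] at hx ⊢
      obtain ⟨i, hi, hx⟩ := hx
      exact ⟨i, hIJ hi, hx⟩
    have hmain : ∀ I : Finset (Fin ℓ), I.Nonempty → I.card ≤ finrank ℝ (U I) := by
      intro I hI
      have hcard : (I.image Fin.castSucc).card = I.card :=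
        Finset.card_image_of_injective _ (Fin.castSucc_injective ℓ)
      have hset : (⋃ i ∈ I.image Fin.castSucc, S i) = ⋃ i ∈ I, S i.castSucc := by
        ext x
        simp only [Set.mem_iUnion, Finset.mem_image]
        constructor
        · rintro ⟨i, ⟨j, hj, rfl⟩, hx⟩; exact ⟨j, hj, hx⟩
        · rintro ⟨j, hj, hx⟩; exact ⟨j.castSucc, ⟨j, hj, rfl⟩, hx⟩
      have := h (I.image Fin.castSucc) (hI.image _)
      rwa [hcard, hset] at this
    have hUunion : ∀ I J : Finset (Fin ℓ), U (I ∪ J) = U I ⊔ U J := by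
      intro I J
      simp only [hU]
      rw [Finset.set_biUnion_union, Submodule.span_union]
    have hUbot : U ∅ = ⊥ := by simp [hU]
    -- criticality is preserved under unions
    have hPsup : ∀ I J : Finset (Fin ℓ), finrank ℝ (U I) ≤ I.card →
        finrank ℝ (U J) ≤ J.card → finrank ℝ (U (I ∪ J)) ≤ (I ∪ J).card := by
      intro I J hI hJ
      have e2 : U (I ∩ J) ≤ U I ⊓ U J :=
        le_inf (hUmono Finset.inter_subset_left) (hUmono Finset.inter_subset_right)
      have e3 : (I ∩ J).card ≤ finrank ℝ (U (I ∩ J)) := by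
        rcases (I ∩ J).eq_empty_or_nonempty with he | hne
        · simp [he]
        · exact hmain _ hne
      have e4 := Submodule.finrank_sup_add_finrank_inf_eq (U I) (U J)
      rw [← hUunion] at e4
      have e5 : finrank ℝ (U (I ∩ J)) ≤ finrank ℝ (U I ⊓ U J : Submodule ℝ V) :=
        Submodule.finrank_mono e2
      have e6 := Finset.card_union_add_card_inter I J
      omega
    set C : Finset (Fin ℓ) :=
      (Finset.univ.powerset.filter (fun I => finrank ℝ (U I) ≤ I.card)).sup id with hC
    have hPC : finrank ℝ (U C) ≤ C.card := by
      rw [hC]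
      refine Finset.sup_induction (p := fun J => finrank ℝ (U J) ≤ J.card) ?_
        (fun I hI J hJ => hPsup I J hI hJ)
        (fun I hIf => (Finset.mem_filter.mp hIf).2)
      show finrank ℝ (U ∅) ≤ (∅ : Finset (Fin ℓ)).card
      simp [hUbot]
    have hCmax : ∀ I : Finset (Fin ℓ), finrank ℝ (U I) ≤ I.card → I ⊆ C := by
      intro I hI
      have hmem : I ∈ Finset.univ.powerset.filter (fun I => finrank ℝ (U I) ≤ I.card) :=
        Finset.mem_filter.mpr ⟨Finset.mem_powerset.mpr (Finset.subset_univ I), hI⟩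
      exact Finset.le_sup (f := id) hmem
    -- find s ∈ S last avoiding U C
    have hnotsub : ¬ S (Fin.last ℓ) ⊆ (U C : Set V) := by
      intro hsub
      set J : Finset (Fin (ℓ+1)) := insert (Fin.last ℓ) (C.image Fin.castSucc) with hJ
      have hlast : Fin.last ℓ ∉ C.image Fin.castSucc := by
        simp only [Finset.mem_image, not_exists, not_and]
        intro j _
        exact (Fin.castSucc_lt_last j).ne
      have hcard : J.card = C.card + 1 := by
        rw [hJ, Finset.card_insert_of_notMem hlast,
          Finset.card_image_of_injective _ (Fin.castSucc_injective ℓ)]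
      have hle : span ℝ (⋃ i ∈ J, S i) ≤ U C := by
        rw [span_le]
        intro x hx
        simp only [Set.mem_iUnion] at hx
        obtain ⟨i, hi, hx⟩ := hx
        rw [hJ, Finset.mem_insert] at hi
        rcases hi with rfl | hi
        · exact hsub hx
        · obtain ⟨j, hj, rfl⟩ := Finset.mem_image.mp hi
          exact subset_span (Set.mem_biUnion hj hx)
      have := h J ⟨_, Finset.mem_insert_self _ _⟩
      rw [hcard] at this
      have := this.trans (Submodule.finrank_mono hle)
      omega
    obtain ⟨s, hsS, hsC⟩ := Set.not_subset.mp hnotsub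
    have hs0 : s ≠ 0 := fun h0 => hsC (h0 ▸ (U C).zero_mem)
    set K : Submodule ℝ V := span ℝ {s} with hK
    have hK1 : finrank ℝ K = 1 := finrank_span_singleton hs0
    -- key rank bound
    have hkey : ∀ I : Finset (Fin ℓ), I.Nonempty →
        I.card + 1 ≤ finrank ℝ ((U I ⊔ K : Submodule ℝ V)) := by
      intro I hI
      by_cases hcrit : finrank ℝ (U I) ≤ I.card
      · have hsUI : s ∉ U I := fun hmem => hsC (hUmono (hCmax I hcrit) hmem)
        have hinf : U I ⊓ K = ⊥ := by
          rw [eq_bot_iff]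
          intro x hx
          obtain ⟨hxU, hxK⟩ := hx
          obtain ⟨c, rfl⟩ := Submodule.mem_span_singleton.mp hxK
          rcases eq_or_ne c 0 with rfl | hc
          · simp
          · exfalso
            exact hsUI (by simpa [smul_smul, inv_mul_cancel₀ hc] using (U I).smul_mem c⁻¹ hxU)
        have e := Submodule.finrank_sup_add_finrank_inf_eq (U I) K
        rw [hinf] at e
        simp only [finrank_bot, add_zero] at e
        rw [e, hK1]
        have := hmain I hI
        omega
      · push_neg at hcrit
        have := Submodule.finrank_mono (le_sup_left : U I ≤ U I ⊔ K)
        omega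
    -- pass to the quotient
    set S' : Fin ℓ → Set (V ⧸ K) := fun i => K.mkQ '' S i.castSucc with hS'
    have hIH : ∀ I : Finset (Fin ℓ), I.Nonempty →
        I.card ≤ finrank ℝ (span ℝ (⋃ i ∈ I, S' i) : Submodule ℝ (V ⧸ K)) := by
      intro I hI
      have e : span ℝ (⋃ i ∈ I, S' i) = (U I).map K.mkQ := by
        have e1 : (⋃ i ∈ I, S' i) = K.mkQ '' ⋃ i ∈ I, S i.castSucc := by
          simp only [hS']
          rw [Set.image_iUnion₂]
        rw [e1, Submodule.span_image]
      rw [e]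
      have h2 := aux_finrank_map_mkQ K (U I)
      have h3 := hkey I hI
      omega
    obtain ⟨w, hwmem, hwind⟩ := ih (V ⧸ K) S' hIH
    choose t htS htw using fun i => hwmem i
    have hts : K.mkQ ∘ t = w := funext htw
    have htind : LinearIndependent ℝ t := LinearIndependent.of_comp K.mkQ (hts ▸ hwind)
    have hsnot : s ∉ span ℝ (Set.range t) := by
      intro hmem
      rw [mem_span_range_iff_exists_fun] at hmem
      obtain ⟨c, hc⟩ := hmem
      have h0 : ∑ i, c i • w i = 0 := by
        rw [← hts]
        have e : ∑ i, c i • (K.mkQ ∘ t) i = K.mkQ (∑ i, c i • t i) := by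
          rw [map_sum]; simp
        rw [e, hc]
        rw [Submodule.mkQ_apply, Submodule.Quotient.mk_eq_zero]
        exact Submodule.mem_span_singleton_self s
      have hc0 := Fintype.linearIndependent_iff.mp hwind c h0
      apply hs0
      rw [← hc]
      simp [hc0]
    refine ⟨Fin.snoc t s, ?_, ?_⟩
    · intro i
      refine Fin.lastCases ?_ (fun j => ?_) i
      · simpa using hsS
      · simpa using htS j
    · exact linearIndependent_fin_snoc.mpr ⟨htind, hsnot⟩

end RadoAux

section MainAux

open Submodule Module

lemma pad_mem {V : Type*} [AddCommGroup V] [Module ℝ V] {ι : Type*} [DecidableEq ι]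
    (f : ι → Set V) (h0 : ∀ i, (0 : V) ∈ f i) (I : Finset ι) {i : ι} (hi : i ∈ I)
    {d : V} (hd : d ∈ f i) : d ∈ ∑ j ∈ I, f j := by
  have hmem := Set.finset_sum_mem_finset_sum I f (fun j => if j = i then d else 0) ?_
  · have e : ∑ j ∈ I, (if j = i then d else 0) = d := by
      rw [Finset.sum_ite_eq' I i (fun _ => d)]
      simp [hi]
    rwa [e] at hmem
  · intro j _
    by_cases hji : j = i
    · subst hji; simp [hd]
    · simp [hji, h0 j]

lemma span_sum_eq {n ℓ : ℕ} (A : Fin ℓ → Set (Euc n)) (hA : ∀ i, (A i).Nonempty)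
    (I : Finset (Fin ℓ)) :
    span ℝ (∑ i ∈ I, (A i - A i)) = span ℝ (⋃ i ∈ I, (A i - A i)) := by
  classical
  have h0 : ∀ i, (0 : Euc n) ∈ A i - A i := by
    intro i
    obtain ⟨a, ha⟩ := hA i
    exact sub_self a ▸ Set.sub_mem_sub ha ha
  apply le_antisymm <;> rw [span_le] <;> intro x hx
  · rw [Set.mem_finset_sum] at hx
    obtain ⟨g, hg, rfl⟩ := hx
    exact Submodule.sum_mem _ fun i hi => subset_span (Set.mem_biUnion hi (hg hi))
  · obtain ⟨i, hiI, hxi⟩ := Set.mem_iUnion₂.mp hx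
    exact subset_span (pad_mem _ h0 I hiI hxi)

end MainAux

/-- A tuple of nonempty sets is semicritical iff one can pick pairs of points in each set whose
differences are linearly independent. -/
theorem semicritical_iff_linearIndependent {n ℓ : ℕ} (A : Fin ℓ → Set (Euc n))
    (hA : ∀ i, (A i).Nonempty) :
    Semicritical A ↔
      ∃ x y : Fin ℓ → Euc n, (∀ i, x i ∈ A i ∧ y i ∈ A i) ∧
        LinearIndependent ℝ (fun i => y i - x i) := by
    classical
  constructor
  · intro hsc
    obtain ⟨v, hv, hind⟩ := rado ℓ (Euc n) (fun i => A i - A i) (by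
      intro I hI
      rw [← span_sum_eq A hA I]
      exact hsc I hI)
    choose y hy x hx hxy using fun i => Set.mem_sub.mp (hv i)
    refine ⟨x, y, fun i => ⟨hx i, hy i⟩, ?_⟩
    have : (fun i => y i - x i) = v := funext hxy
    rw [this]
    exact hind
  · rintro ⟨x, y, hxy, hind⟩ I hI
    have h0 : ∀ i, (0 : Euc n) ∈ A i - A i := by
      intro i
      obtain ⟨a, ha⟩ := hA i
      exact sub_self a ▸ Set.sub_mem_sub ha ha
    have hli : LinearIndependent ℝ (fun i : I => y (i : Fin ℓ) - x (i : Fin ℓ)) :=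
      hind.comp _ Subtype.val_injective
    have hsub : Set.range (fun i : I => y (i : Fin ℓ) - x (i : Fin ℓ))
        ⊆ ∑ j ∈ I, (A j - A j) := by
      rintro _ ⟨i, rfl⟩
      exact pad_mem _ h0 I i.2 (Set.sub_mem_sub (hxy i).2 (hxy i).1)
    calc I.card = Fintype.card I := (Fintype.card_coe I).symm
      _ = Module.finrank ℝ
            (Submodule.span ℝ (Set.range (fun i : I => y (i : Fin ℓ) - x (i : Fin ℓ)))) :=
          (finrank_span_eq_card hli).symm
      _ ≤ Module.finrank ℝ (Submodule.span ℝ (∑ i ∈ I, (A i - A i)) : Submodule ℝ (Euc n)) :=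
          Submodule.finrank_mono (Submodule.span_le.mpr (hsub.trans Submodule.subset_span))
end

section
/- Let (A₁,…,A_ℓ) be a tuple of nonempty subsets of ℝⁿ with ℓ ≥ 1, and suppose A₁ = B + C for nonempty sets B, C (Minkowski sum). Then (A₁, A₂,…,A_ℓ) is semicritical if and only if (B, A₂,…,A_ℓ) is semicritical or (C, A₂,…,A_ℓ) is semicritical. -/
open Set MeasureTheory Metric
open scoped Pointwise

section Aux

open Pointwise Submodule Module

lemma aux_span_add {n : ℕ} (S T : Set (Euc n)) (hS : (0 : Euc n) ∈ S)
    (hT : (0 : Euc n) ∈ T) :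
    Submodule.span ℝ (S + T) = Submodule.span ℝ S ⊔ Submodule.span ℝ T := by
  apply le_antisymm
  · rw [Submodule.span_le]
    rintro x hx
    rcases Set.mem_add.1 hx with ⟨s, hs, t, ht, rfl⟩
    exact Submodule.add_mem _
      (Submodule.mem_sup_left (Submodule.subset_span hs))
      (Submodule.mem_sup_right (Submodule.subset_span ht))
  · apply sup_le <;> rw [Submodule.span_le] <;> intro x hx
    · have : x + 0 ∈ S + T := Set.add_mem_add hx hT
      simpa using Submodule.subset_span this
    · have : (0 : Euc n) + x ∈ S + T := Set.add_mem_add hS hx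
      simpa using Submodule.subset_span this

lemma aux_zero_mem_sum {n : ℕ} {ι : Type*} (I : Finset ι) (S : ι → Set (Euc n))
    (h : ∀ i, (0 : Euc n) ∈ S i) : (0 : Euc n) ∈ ∑ i ∈ I, S i := by
  classical
  induction I using Finset.induction_on with
  | empty => simp
  | insert _ _ hni ih =>
      rw [Finset.sum_insert hni]
      simpa using Set.add_mem_add (h _) ih

lemma aux_span_sum {n : ℕ} {ι : Type*} (I : Finset ι) (S : ι → Set (Euc n))
    (h : ∀ i, (0 : Euc n) ∈ S i) :
    Submodule.span ℝ (∑ i ∈ I, S i) = I.sup (fun i => Submodule.span ℝ (S i)) := by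
  classical
  induction I using Finset.induction_on with
  | empty => simp
  | insert _ _ hni ih =>
      rw [Finset.sum_insert hni, aux_span_add _ _ (h _) (aux_zero_mem_sum _ _ h),
        Finset.sup_insert, ih]

lemma aux_semicritical_iff {n ℓ : ℕ} (A : Fin ℓ → Set (Euc n)) (hA : ∀ i, (A i).Nonempty) :
    Semicritical A ↔ SemicriticalSub (fun i => Submodule.span ℝ (A i - A i)) := by
  have h0 : ∀ i, (0 : Euc n) ∈ A i - A i := fun i => by
    obtain ⟨x, hx⟩ := hA i
    simpa using Set.sub_mem_sub hx hx
  have key : ∀ I : Finset (Fin ℓ),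
      Submodule.span ℝ (∑ i ∈ I, (A i - A i))
        = I.sup (fun i => Submodule.span ℝ (A i - A i)) := fun I =>
    aux_span_sum I _ h0
  constructor <;> intro h I hI
  · rw [← key]; exact h I hI
  · rw [key]; exact h I hI

lemma aux_extract {n ℓ : ℕ} {V : Fin (ℓ + 1) → Submodule ℝ (Euc n)}
    (hV : SemicriticalSub V) (D : Submodule ℝ (Euc n))
    (h : ¬ SemicriticalSub (Function.update V 0 D)) :
    ∃ J : Finset (Fin (ℓ + 1)), 0 ∉ J ∧ D ≤ J.sup V ∧
      Module.finrank ℝ (J.sup V : Submodule ℝ (Euc n)) ≤ J.card := by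
  classical
  have cardLe : ∀ J : Finset (Fin (ℓ + 1)),
      J.card ≤ Module.finrank ℝ (J.sup V : Submodule ℝ (Euc n)) := by
    intro J
    rcases J.eq_empty_or_nonempty with rfl | hJ
    · simp
    · exact hV J hJ
  simp only [SemicriticalSub, not_forall] at h
  obtain ⟨I, hIne, hIr⟩ := h
  push_neg at hIr
  have h0I : (0 : Fin (ℓ + 1)) ∈ I := by
    by_contra h0
    have : I.sup (Function.update V 0 D) = I.sup V := by
      refine Finset.sup_congr rfl fun i hi => ?_
      exact Function.update_of_ne (fun he => h0 (by simpa [he] using hi)) _ _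
    rw [this] at hIr
    exact absurd (hV I hIne) (not_le.2 hIr)
  set J := I.erase 0 with hJdef
  have h0J : (0 : Fin (ℓ + 1)) ∉ J := Finset.notMem_erase _ _
  have hIeq : I = insert 0 J := (Finset.insert_erase h0I).symm
  have hsupJ : J.sup (Function.update V 0 D) = J.sup V := by
    refine Finset.sup_congr rfl fun i hi => ?_
    exact Function.update_of_ne (fun he => h0J (by simpa [he] using hi)) _ _
  have hsup : I.sup (Function.update V 0 D) = D ⊔ J.sup V := by
    rw [hIeq, Finset.sup_insert, hsupJ, Function.update_self]
  have hcard : I.card = J.card + 1 := by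
    rw [hIeq, Finset.card_insert_of_notMem h0J]
  rw [hsup, hcard] at hIr
  have h1 : Module.finrank ℝ (D ⊔ J.sup V : Submodule ℝ (Euc n)) ≤ J.card :=
    Nat.lt_succ_iff.1 hIr
  have h2 : Module.finrank ℝ (J.sup V : Submodule ℝ (Euc n))
      ≤ Module.finrank ℝ (D ⊔ J.sup V : Submodule ℝ (Euc n)) :=
    Submodule.finrank_mono le_sup_right
  have heq : J.sup V = D ⊔ J.sup V :=
    Submodule.eq_of_le_of_finrank_le le_sup_right (le_trans h1 (cardLe J))
  exact ⟨J, h0J, heq ▸ le_sup_left, le_trans h2 h1⟩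

lemma aux_key {n ℓ : ℕ} (V : Fin (ℓ + 1) → Submodule ℝ (Euc n))
    (Vb Vc : Submodule ℝ (Euc n)) (h0 : V 0 = Vb ⊔ Vc) :
    SemicriticalSub V ↔
      (SemicriticalSub (Function.update V 0 Vb) ∨
        SemicriticalSub (Function.update V 0 Vc)) := by
  classical
  have cardLe : SemicriticalSub V → ∀ J : Finset (Fin (ℓ + 1)),
      J.card ≤ Module.finrank ℝ (J.sup V : Submodule ℝ (Euc n)) := by
    intro hV J
    rcases J.eq_empty_or_nonempty with rfl | hJ
    · simp
    · exact hV J hJ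
  constructor
  · intro hV
    by_contra hcon
    push_neg at hcon
    obtain ⟨hb, hc⟩ := hcon
    obtain ⟨Jb, h0b, hDb, hrb⟩ := aux_extract hV Vb hb
    obtain ⟨Jc, h0c, hDc, hrc⟩ := aux_extract hV Vc hc
    set K := Jb ∪ Jc with hKdef
    have h0K : (0 : Fin (ℓ + 1)) ∉ K := by
      simp [hKdef, h0b, h0c]
    have hsupK : K.sup V = Jb.sup V ⊔ Jc.sup V := Finset.sup_union
    have hV0le : V 0 ≤ K.sup V := by
      rw [h0, hsupK]
      exact sup_le_sup hDb hDc
    have hIsup : (insert 0 K).sup V = K.sup V := by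
      rw [Finset.sup_insert]
      exact sup_eq_right.2 hV0le
    have hfin := hV (insert 0 K) ⟨0, Finset.mem_insert_self _ _⟩
    rw [hIsup, Finset.card_insert_of_notMem h0K] at hfin
    -- submodularity
    have e1 := Submodule.finrank_sup_add_finrank_inf_eq (Jb.sup V) (Jc.sup V)
    have hinfle : (Jb ∩ Jc).sup V ≤ Jb.sup V ⊓ Jc.sup V :=
      le_inf (Finset.sup_mono Finset.inter_subset_left)
        (Finset.sup_mono Finset.inter_subset_right)
    have e4 : (Jb ∩ Jc).card
        ≤ Module.finrank ℝ ((Jb.sup V) ⊓ (Jc.sup V) : Submodule ℝ (Euc n)) :=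
      le_trans (cardLe hV _) (Submodule.finrank_mono hinfle)
    have e5 : K.card + (Jb ∩ Jc).card = Jb.card + Jc.card :=
      Finset.card_union_add_card_inter _ _
    rw [hsupK] at hfin
    omega
  · intro h
    have hmono : ∀ (D : Submodule ℝ (Euc n)), D ≤ V 0 →
        SemicriticalSub (Function.update V 0 D) → SemicriticalSub V := by
      intro D hD hsc I hI
      refine le_trans (hsc I hI) (Submodule.finrank_mono ?_)
      refine Finset.sup_mono_fun fun i _ => ?_
      rcases eq_or_ne i 0 with rfl | hne
      · simpa using hD
      · rw [Function.update_of_ne hne]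
    rcases h with h | h
    · exact hmono Vb (h0 ▸ le_sup_left) h
    · exact hmono Vc (h0 ▸ le_sup_right) h

lemma aux_sub_add {n : ℕ} (B C : Set (Euc n)) :
    (B + C) - (B + C) = (B - B) + (C - C) := by
  ext x
  constructor
  · rintro hx
    rcases Set.mem_sub.1 hx with ⟨y, hy, z, hz, rfl⟩
    rcases Set.mem_add.1 hy with ⟨b, hb, c, hc, rfl⟩
    rcases Set.mem_add.1 hz with ⟨b', hb', c', hc', rfl⟩
    rw [add_sub_add_comm]
    exact Set.add_mem_add (Set.sub_mem_sub hb hb') (Set.sub_mem_sub hc hc')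
  · rintro hx
    rcases Set.mem_add.1 hx with ⟨y, hy, z, hz, rfl⟩
    rcases Set.mem_sub.1 hy with ⟨b, hb, b', hb', rfl⟩
    rcases Set.mem_sub.1 hz with ⟨c, hc, c', hc', rfl⟩
    rw [← add_sub_add_comm]
    exact Set.sub_mem_sub (Set.add_mem_add hb hc) (Set.add_mem_add hb' hc')

end Aux

/-- Semicritical additivity: if the first set is a Minkowski sum `B + C`, the tuple is
semicritical iff it is semicritical with the first set replaced by `B` or by `C`. -/
theorem semicritical_additivity {n ℓ : ℕ} (A : Fin (ℓ + 1) → Set (Euc n))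
    (hA : ∀ i, (A i).Nonempty) (B C : Set (Euc n)) (hB : B.Nonempty) (hC : C.Nonempty)
    (hBC : A 0 = B + C) :
    Semicritical A ↔
      (Semicritical (Function.update A 0 B) ∨ Semicritical (Function.update A 0 C)) := by
  classical
  set V : Fin (ℓ + 1) → Submodule ℝ (Euc n) := fun i => Submodule.span ℝ (A i - A i) with hVdef
  have h0B : (0 : Euc n) ∈ B - B := by
    obtain ⟨x, hx⟩ := hB; simpa using Set.sub_mem_sub hx hx
  have h0C : (0 : Euc n) ∈ C - C := by
    obtain ⟨x, hx⟩ := hC; simpa using Set.sub_mem_sub hx hx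
  have hV0 : V 0 = Submodule.span ℝ (B - B) ⊔ Submodule.span ℝ (C - C) := by
    rw [hVdef]
    simp only
    rw [hBC, aux_sub_add, aux_span_add _ _ h0B h0C]
  have hupd : ∀ (D : Set (Euc n)),
      (fun i => Submodule.span ℝ (Function.update A 0 D i - Function.update A 0 D i))
        = Function.update V 0 (Submodule.span ℝ (D - D)) := by
    intro D
    funext i
    rcases eq_or_ne i 0 with rfl | hne
    · simp
    · simp [Function.update_of_ne hne, hVdef]
  have hAne : ∀ (D : Set (Euc n)), D.Nonempty → ∀ i, (Function.update A 0 D i).Nonempty := by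
    intro D hD i
    rcases eq_or_ne i 0 with rfl | hne
    · simpa using hD
    · rw [Function.update_of_ne hne]; exact hA i
  rw [aux_semicritical_iff A hA, aux_semicritical_iff _ (hAne B hB),
    aux_semicritical_iff _ (hAne C hC), hupd B, hupd C]
  exact aux_key V _ _ hV0
end
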